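/- arXiv:0901.2393 — 3 statements merged into one kernel-verified Lean document; each statement's English description precedes it below -/
import Mathlib

section
/- Integration by parts for the Cauchy transform: let ν be a finite real-valued Borel measure on ℝ and let G_ν(z) = ∫_ℝ (1/(z − t) + t/(t² + 1)) dν(t) for Im(z) ≠ 0. Then G_ν(z) − ∫_ℝ t/(t² + 1) dν(t) = d/dz [ ∫_ℝ (1/(z − t) + t/(t² + 1)) · ν((−∞, t)) dt ] for all z with Im(z) ≠ 0. -/
/-!
Differentiating under the integral sign, the derivative of the kernel in `w` is `-(w - t)⁻²`,
which for `w` near `z` is dominated by a multiple of `‖z - t‖⁻²`, an integrable Cauchy density;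
since `t ↦ ν (-∞, t)` is bounded, the derivative is `∫ -(z - t)⁻² ν (-∞, t) dt`. Splitting `ν`
into its Jordan parts and applying Fubini to `{(t, s) | s < t}`, this becomes
`∫ (∫_{t > s} -(z - t)⁻² dt) dν(s) = ∫ (z - s)⁻¹ dν(s)`, which is `G_ν(z) - ∫ s / (s² + 1) dν(s)`.
-/

open MeasureTheory Set Filter Topology Complex

lemma measurable_measureReal_Iio (μ : Measure ℝ) [IsFiniteMeasure μ] :
    Measurable fun t => μ.real (Iio t) :=
  Monotone.measurable fun _ _ h => measureReal_mono (Iio_subset_Iio h)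

lemma MeasureTheory.Integrable.mul_measureReal_Iio {f : ℝ → ℂ} (hf : Integrable f)
    (μ : Measure ℝ) [IsFiniteMeasure μ] :
    Integrable fun t => f t * (μ.real (Iio t) : ℂ) :=
  hf.mul_bdd (measurable_measureReal_Iio μ).complex_ofReal.aestronglyMeasurable
    (ae_of_all _ fun t => by
      rw [norm_real, Real.norm_of_nonneg measureReal_nonneg]
      exact measureReal_mono (subset_univ _))

lemma integral_measureReal_Iio_smul_eq_integral_setIntegral_Ioi {E : Type*}
    [NormedAddCommGroup E] [NormedSpace ℝ E] [CompleteSpace E]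
    (μ : Measure ℝ) [IsFiniteMeasure μ] {f : ℝ → E} (hf : Integrable f) :
    ∫ t, μ.real (Iio t) • f t = ∫ s, (∫ t in Ioi s, f t) ∂μ := by
  have hK : Integrable (Function.uncurry fun t s => (Iio t).indicator (fun _ => f t) s)
      ((volume : Measure ℝ).prod μ) :=
    (hf.comp_fst μ).indicator (measurableSet_lt measurable_snd measurable_fst)
  have hswap (t s : ℝ) : (Iio t).indicator (fun _ => f t) s = (Ioi s).indicator f t := by
    simp only [indicator_apply, mem_Iio, mem_Ioi]
  calc ∫ t, μ.real (Iio t) • f t = ∫ t, ∫ s, (Iio t).indicator (fun _ => f t) s ∂μ := by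
        simp_rw [integral_indicator_const _ measurableSet_Iio]
    _ = ∫ s, (∫ t, (Iio t).indicator (fun _ => f t) s) ∂μ := integral_integral_swap hK
    _ = ∫ s, (∫ t in Ioi s, f t) ∂μ := by simp_rw [hswap, integral_indicator measurableSet_Ioi]

namespace Complex

variable {w z : ℂ}

lemma abs_im_le_norm_sub_ofReal (w : ℂ) (t : ℝ) : |w.im| ≤ ‖w - t‖ := by
  simpa using abs_im_le_norm (w - t)

lemma sub_ofReal_ne_zero (hw : w.im ≠ 0) (t : ℝ) : w - t ≠ 0 :=
  norm_pos_iff.1 ((abs_pos.2 hw).trans_le (abs_im_le_norm_sub_ofReal w t))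

lemma norm_inv_sub_ofReal_le (hw : w.im ≠ 0) (t : ℝ) : ‖(w - t)⁻¹‖ ≤ |w.im|⁻¹ := by
  rw [norm_inv]
  exact inv_anti₀ (abs_pos.2 hw) (abs_im_le_norm_sub_ofReal w t)

lemma norm_sub_ofReal_le_two_mul_norm_sub_ofReal (hw : dist w z < |z.im| / 2) (t : ℝ) :
    ‖z - t‖ ≤ 2 * ‖w - t‖ := by
  have := abs_im_le_norm_sub_ofReal z t
  have := norm_sub_le_norm_sub_add_norm_sub z w t
  rw [← dist_eq z w, dist_comm z w] at this
  linarith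

/-- `‖(w - t)⁻²‖` is a multiple of the Cauchy density with location `w.re` and scale `|w.im|`. -/
lemma integrable_inv_sub_ofReal_sq (hw : w.im ≠ 0) :
    Integrable fun t : ℝ => ((w - t) ^ 2)⁻¹ := by
  refine (integrable_norm_iff (by fun_prop : Measurable _).aestronglyMeasurable).1 ?_
  have hpdf (t : ℝ) : ‖((w - t) ^ 2)⁻¹‖ =
      (Real.pi / |w.im|) * ProbabilityTheory.cauchyPDFReal w.re ‖w.im‖₊ t := by
    rw [ProbabilityTheory.cauchyPDFReal_def, coe_nnnorm, Real.norm_eq_abs, sq_abs, norm_inv,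
      norm_pow, Complex.sq_norm, normSq_apply]
    simp only [sub_re, ofReal_re, sub_im, ofReal_im, sub_zero]
    field_simp
    ring
  simp_rw [hpdf]
  exact ProbabilityTheory.integrable_cauchyPDFReal _ |>.const_mul _

lemma integrable_inv_sub_ofReal_mul_inv_sub_ofReal (hz : z.im ≠ 0) (hw : w.im ≠ 0) :
    Integrable fun t : ℝ => (z - t)⁻¹ * (w - t)⁻¹ := by
  refine ((integrable_inv_sub_ofReal_sq hz).norm.add (integrable_inv_sub_ofReal_sq hw).norm).mono'
    (by fun_prop) (ae_of_all _ fun t => ?_)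
  simp only [Pi.add_apply, norm_mul, norm_inv, norm_pow, ← inv_pow]
  nlinarith [two_mul_le_add_sq ‖z - t‖⁻¹ ‖w - t‖⁻¹, inv_nonneg.2 (norm_nonneg (z - t)),
    inv_nonneg.2 (norm_nonneg (w - t))]

lemma tendsto_inv_sub_ofReal_atTop (z : ℂ) :
    Tendsto (fun t : ℝ => (z - t)⁻¹) atTop (𝓝 0) :=
  tendsto_inv₀_cobounded.comp
    ((tendsto_const_sub_cobounded z).comp (RCLike.tendsto_ofReal_atTop_cobounded ℂ))

lemma hasDerivAt_inv_sub_ofReal (hz : z.im ≠ 0) (t : ℝ) :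
    HasDerivAt (fun s : ℝ => (z - s)⁻¹) ((z - t) ^ 2)⁻¹ t := by
  have h := ((hasDerivAt_id (t : ℂ)).const_sub z).inv (sub_ofReal_ne_zero hz t)
  simpa using h.comp_ofReal

lemma setIntegral_Ioi_inv_sub_ofReal_sq (hz : z.im ≠ 0) (s : ℝ) :
    ∫ t in Ioi s, ((z - t) ^ 2)⁻¹ = -(z - s)⁻¹ := by
  rw [integral_Ioi_of_hasDerivAt_of_tendsto' (fun t _ => hasDerivAt_inv_sub_ofReal hz t)
    (integrable_inv_sub_ofReal_sq hz).integrableOn (tendsto_inv_sub_ofReal_atTop z), zero_sub]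

lemma integral_measureReal_Iio_mul_inv_sub_ofReal_sq (hz : z.im ≠ 0) (μ : Measure ℝ)
    [IsFiniteMeasure μ] :
    ∫ t : ℝ, ((z - t) ^ 2)⁻¹ * (μ.real (Iio t) : ℂ) = -∫ s, (z - s)⁻¹ ∂μ := by
  simp_rw [mul_comm _ ((μ.real _ : ℝ) : ℂ), ← real_smul,
    integral_measureReal_Iio_smul_eq_integral_setIntegral_Ioi μ (integrable_inv_sub_ofReal_sq hz),
    setIntegral_Ioi_inv_sub_ofReal_sq hz, integral_neg]

end Complex

noncomputable def cauchyKernel (w : ℂ) (t : ℝ) : ℂ := 1 / (w - t) + t / (t ^ 2 + 1)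

section CauchyKernel

variable {w z : ℂ}

lemma cauchyKernel_eq (hw : w.im ≠ 0) (t : ℝ) :
    cauchyKernel w t = (I - w) * ((w - t)⁻¹ * (I - t)⁻¹) - I * ((I - t)⁻¹ * (-I - t)⁻¹) := by
  have h₁ := sub_ofReal_ne_zero hw t
  have h₂ := sub_ofReal_ne_zero (by simp : I.im ≠ 0) t
  have h₃ := sub_ofReal_ne_zero (by simp : (-I).im ≠ 0) t
  have h₄ : (t : ℂ) ^ 2 + 1 = (I - t) * (-I - t) := by linear_combination I_sq
  rw [cauchyKernel, h₄]
  field_simp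
  ring_nf

lemma integrable_cauchyKernel (hw : w.im ≠ 0) : Integrable (cauchyKernel w) := by
  have hI : I.im ≠ 0 := by simp
  have hI' : (-I).im ≠ 0 := by simp
  simp_rw [funext (cauchyKernel_eq hw)]
  exact ((integrable_inv_sub_ofReal_mul_inv_sub_ofReal hw hI).const_mul _).sub
    ((integrable_inv_sub_ofReal_mul_inv_sub_ofReal hI hI').const_mul _)

lemma hasDerivAt_cauchyKernel {t : ℝ} (h : w - t ≠ 0) :
    HasDerivAt (cauchyKernel · t) (-((w - t) ^ 2)⁻¹) w := by
  have := (((hasDerivAt_id w).sub_const (t : ℂ)).inv h).add_const ((t : ℂ) / (t ^ 2 + 1))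
  simpa [cauchyKernel, neg_div] using this

lemma hasDerivAt_integral_cauchyKernel_mul {c : ℝ → ℝ} {C : ℝ} (hc : Measurable c)
    (hcC : ∀ t, |c t| ≤ C) (hz : z.im ≠ 0) :
    HasDerivAt (fun w => ∫ t, cauchyKernel w t * c t)
      (∫ t : ℝ, -((z - t) ^ 2)⁻¹ * (c t : ℂ)) z := by
  have hball : Metric.ball z (|z.im| / 2) ∈ 𝓝 z := Metric.ball_mem_nhds z (by positivity)
  have hC : 0 ≤ C := (abs_nonneg _).trans (hcC 0)
  have hzt (t : ℝ) : 0 < ‖z - t‖ := norm_pos_iff.2 (sub_ofReal_ne_zero hz t)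
  have hnear {w} (hw : w ∈ Metric.ball z (|z.im| / 2)) (t : ℝ) : ‖z - t‖ ≤ 2 * ‖w - t‖ :=
    norm_sub_ofReal_le_two_mul_norm_sub_ofReal hw t
  refine (hasDerivAt_integral_of_dominated_loc_of_deriv_le (μ := (volume : Measure ℝ))
    (F := fun w (t : ℝ) => cauchyKernel w t * c t)
    (F' := fun w (t : ℝ) => -((w - t) ^ 2)⁻¹ * (c t : ℂ))
    (bound := fun t : ℝ => 4 * C * ‖((z - t) ^ 2)⁻¹‖) hball ?_ ?_ ?_ ?_ ?_ ?_).2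
  · exact .of_forall fun w => by unfold cauchyKernel; fun_prop
  · exact (integrable_cauchyKernel hz).mul_bdd (by fun_prop)
      (ae_of_all _ fun t => by simpa using hcC t)
  · fun_prop
  · refine ae_of_all _ fun t w hw => ?_
    have hwt : ‖((w - t) ^ 2)⁻¹‖ ≤ 4 * ‖((z - t) ^ 2)⁻¹‖ := by
      simp only [norm_inv, norm_pow]
      rw [show 4 * (‖z - t‖ ^ 2)⁻¹ = ((‖z - t‖ / 2) ^ 2)⁻¹ by ring]
      have := hzt t
      exact inv_anti₀ (by positivity)
        (pow_le_pow_left₀ (by positivity) (by linarith [hnear hw t]) 2)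
    calc ‖-((w - t) ^ 2)⁻¹ * (c t : ℂ)‖ = ‖((w - t) ^ 2)⁻¹‖ * |c t| := by simp
      _ ≤ 4 * ‖((z - t) ^ 2)⁻¹‖ * C := mul_le_mul hwt (hcC t) (abs_nonneg _) (by positivity)
      _ = 4 * C * ‖((z - t) ^ 2)⁻¹‖ := by ring
  · exact (integrable_inv_sub_ofReal_sq hz).norm.const_mul _
  · refine ae_of_all _ fun t w hw => (hasDerivAt_cauchyKernel ?_).mul_const _
    exact norm_pos_iff.1 (by linarith [hzt t, hnear hw t])

lemma integral_inv_sub_ofReal_eq (hz : z.im ≠ 0) (μ : Measure ℝ) [IsFiniteMeasure μ] :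
    ∫ s : ℝ, (z - s)⁻¹ ∂μ = ∫ s, cauchyKernel z s ∂μ - ((∫ s, s / (s ^ 2 + 1) ∂μ : ℝ) : ℂ) := by
  have h₁ : Integrable (fun s : ℝ => (z - s)⁻¹) μ :=
    .of_bound (by fun_prop) _ (ae_of_all _ (norm_inv_sub_ofReal_le hz))
  have h₂ : Integrable (fun s : ℝ => ((s / (s ^ 2 + 1) : ℝ) : ℂ)) μ := by
    refine .of_bound (Measurable.aestronglyMeasurable (by fun_prop)) 1 (ae_of_all _ fun s => ?_)
    rw [norm_real, Real.norm_eq_abs, abs_div, abs_of_pos (by positivity : 0 < s ^ 2 + 1),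
      div_le_one (by positivity)]
    nlinarith [sq_nonneg (|s| - 1), sq_abs s]
  have hk (s : ℝ) : cauchyKernel z s = (z - s)⁻¹ + ((s / (s ^ 2 + 1) : ℝ) : ℂ) := by
    simp [cauchyKernel]
  simp_rw [hk]
  rw [integral_add h₁ h₂, integral_complex_ofReal, add_sub_cancel_right]

end CauchyKernel

/-- integration by parts for the Cauchy transform of a finite
real-valued (signed) Borel measure `ν`:
`G_ν(z) − ∫ t/(t²+1) dν(t) = d/dz ∫ (1/(z−t) + t/(t²+1)) ν((−∞,t)) dt` for `Im z ≠ 0`.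
Integrals against `ν` are expressed through its Jordan decomposition. -/
theorem cauchyTransform_integration_by_parts (ν : MeasureTheory.SignedMeasure ℝ)
    (z : ℂ) (hz : z.im ≠ 0) :
    HasDerivAt
      (fun w : ℂ => ∫ t : ℝ, (1 / (w - (t : ℂ)) + (t : ℂ) / ((t : ℂ) ^ 2 + 1)) *
        (ν (Set.Iio t) : ℂ))
      (((∫ t : ℝ, (1 / (z - (t : ℂ)) + (t : ℂ) / ((t : ℂ) ^ 2 + 1))
            ∂ν.toJordanDecomposition.posPart) -
          ∫ t : ℝ, (1 / (z - (t : ℂ)) + (t : ℂ) / ((t : ℂ) ^ 2 + 1))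
            ∂ν.toJordanDecomposition.negPart) -
        ((((∫ t : ℝ, t / (t ^ 2 + 1) ∂ν.toJordanDecomposition.posPart) -
          ∫ t : ℝ, t / (t ^ 2 + 1) ∂ν.toJordanDecomposition.negPart) : ℝ) : ℂ)) z := by
  set μp := ν.toJordanDecomposition.posPart
  set μn := ν.toJordanDecomposition.negPart
  have hν (t : ℝ) : ν (Iio t) = μp.real (Iio t) - μn.real (Iio t) :=
    ν.apply_eq_posPart_real_sub_negPart_real measurableSet_Iio
  have hbound (t : ℝ) :
      |μp.real (Iio t) - μn.real (Iio t)| ≤ max (μp.real univ) (μn.real univ) :=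
    abs_sub_le_of_nonneg_of_le measureReal_nonneg
      (measureReal_mono (subset_univ _) |>.trans (le_max_left _ _)) measureReal_nonneg
      (measureReal_mono (subset_univ _) |>.trans (le_max_right _ _))
  simp only [hν]
  refine (hasDerivAt_integral_cauchyKernel_mul (c := fun t => μp.real (Iio t) - μn.real (Iio t))
    ((measurable_measureReal_Iio μp).sub (measurable_measureReal_Iio μn)) hbound hz).congr_deriv ?_
  change _ = ∫ t, cauchyKernel z t ∂μp - ∫ t, cauchyKernel z t ∂μn - _
  push_cast
  simp_rw [neg_mul, integral_neg, mul_sub]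
  rw [integral_sub ((integrable_inv_sub_ofReal_sq hz).mul_measureReal_Iio μp)
    ((integrable_inv_sub_ofReal_sq hz).mul_measureReal_Iio μn)]
  simp_rw [integral_measureReal_Iio_mul_inv_sub_ofReal_sq hz, integral_inv_sub_ofReal_eq hz]
  ring
end

section
/- Recursion for Taylor remainders of the resolvent: let H₀ be a self-adjoint operator on a Hilbert space H and V a bounded self-adjoint operator. For z ∈ ℂ \ ℝ let f_z(λ) = 1/(z − λ) and let R_{p,H₀,V}(f_z) = f_z(H₀ + V) − Σ_{j=0}^{p−1} (1/j!) (d^j/dt^j)|_{t=0} f_z(H₀ + tV) be the p-th order Taylor remainder. Then R_{p+1,H₀,V}(f_z) = R_{p,H₀,V}(f_z) − ((zI − H₀)^{-1} V)^p (zI − H₀)^{-1}. -/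
/-!
The second resolvent identity gives `R t = R 0 + t • (A * R t)` with `A = R 0 * V`, so for small
`t` one has `R t = (1 - t A)⁻¹ R 0 = ∑ tⁿ Aⁿ R 0`. Hence the `p`-th Taylor coefficient of `R` at
`0` is `Aᵖ R 0`, which is exactly the term by which the two remainders differ.
-/

open scoped Nat NNReal ENNReal

theorem norm_pow_mul_le {α : Type*} [SeminormedRing α] (a b : α) (n : ℕ) :
    ‖a ^ n * b‖ ≤ ‖a‖ ^ n * ‖b‖ := by
  induction n with
  | zero => simp
  | succ n ih =>
    calc ‖a ^ (n + 1) * b‖ = ‖a * (a ^ n * b)‖ := by rw [pow_succ', mul_assoc]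
      _ ≤ ‖a‖ * (‖a‖ ^ n * ‖b‖) := (norm_mul_le _ _).trans (by gcongr)
      _ = ‖a‖ ^ (n + 1) * ‖b‖ := by ring

section NeumannSeries

variable {𝕜 𝓐 : Type*} [NontriviallyNormedField 𝕜] [NormedRing 𝓐] [NormedAlgebra 𝕜 𝓐]

variable (𝕜) in
/-- The power series of `t ↦ (1 - t A)⁻¹ B`. -/
noncomputable def neumannSeries (A B : 𝓐) : FormalMultilinearSeries 𝕜 𝕜 𝓐 :=
  fun n ↦ ContinuousMultilinearMap.mkPiRing 𝕜 (Fin n) (A ^ n * B)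

theorem neumannSeries_apply_diag (A B : 𝓐) (n : ℕ) (y : 𝕜) :
    neumannSeries 𝕜 A B n (fun _ ↦ y) = (y • A) ^ n * B := by
  simp [neumannSeries, smul_pow]

theorem le_radius_neumannSeries (A B : 𝓐) {r : ℝ≥0} (hr : r * ‖A‖₊ ≤ 1) :
    (r : ℝ≥0∞) ≤ (neumannSeries 𝕜 A B).radius := by
  refine (neumannSeries 𝕜 A B).le_radius_of_bound ‖B‖ fun n ↦ ?_
  have hr' : (r : ℝ) * ‖A‖ ≤ 1 := by exact_mod_cast hr
  calc ‖neumannSeries 𝕜 A B n‖ * r ^ n = ‖A ^ n * B‖ * r ^ n := by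
        rw [neumannSeries, ContinuousMultilinearMap.norm_mkPiRing]
    _ ≤ ‖A‖ ^ n * ‖B‖ * r ^ n := by gcongr; exact norm_pow_mul_le A B n
    _ = (r * ‖A‖) ^ n * ‖B‖ := by ring
    _ ≤ ‖B‖ := mul_le_of_le_one_left (norm_nonneg B) (pow_le_one₀ (by positivity) hr')

variable [CompleteSpace 𝓐] {A : 𝓐} {F : 𝕜 → 𝓐}

theorem hasFPowerSeriesOnBall_of_eq_add_smul_mul (hF : ∀ t, F t = F 0 + t • (A * F t))
    {r : ℝ≥0} (hr0 : 0 < r) (hr : r * ‖A‖₊ < 1) :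
    HasFPowerSeriesOnBall F (neumannSeries 𝕜 A (F 0)) 0 r where
  r_le := le_radius_neumannSeries A (F 0) hr.le
  r_pos := by exact_mod_cast hr0
  hasSum {y} hy := by
    have hy : ‖y • A‖ < 1 := by
      rw [mem_eball_zero_iff, enorm_lt_coe] at hy
      calc ‖y • A‖ ≤ ‖y‖ * ‖A‖ := norm_smul_le y A
        _ ≤ r * ‖A‖ := by gcongr; exact_mod_cast hy.le
        _ < 1 := by exact_mod_cast hr
    obtain ⟨u, hu⟩ := isUnit_one_sub_of_norm_lt_one hy
    have hFy : F (0 + y) = Ring.inverse (1 - y • A) * F 0 := by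
      have h : (1 - y • A) * F y = F 0 := by
        rw [sub_mul, one_mul, smul_mul_assoc, sub_eq_iff_eq_add]
        exact hF y
      rw [zero_add, ← h, ← mul_assoc, Ring.inverse_mul_cancel _ ⟨u, hu⟩, one_mul]
    simpa only [neumannSeries_apply_diag, hFy] using
      (hasSum_geom_series_inverse (y • A) hy).mul_right (F 0)

theorem iteratedDeriv_eq_of_eq_add_smul_mul (hF : ∀ t, F t = F 0 + t • (A * F t)) (n : ℕ) :
    iteratedDeriv n F 0 = n ! • (A ^ n * F 0) := by
  have hr0 : (0 : ℝ≥0) < (‖A‖₊ + 1)⁻¹ := by positivity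
  have hr : (‖A‖₊ + 1)⁻¹ * ‖A‖₊ < 1 := by
    rw [inv_mul_lt_iff₀ (by positivity)]; simp
  rw [iteratedDeriv_eq_iteratedFDeriv,
    ← (hasFPowerSeriesOnBall_of_eq_add_smul_mul hF hr0 hr).factorial_smul 1 n,
    neumannSeries_apply_diag, one_smul]

end NeumannSeries

theorem resolvent_eq_add_smul_mul {E : Type*} [NormedAddCommGroup E] [NormedSpace ℂ E]
    (T : E →ₗ.[ℂ] E) (V : E →L[ℂ] E) (z : ℂ) (t : ℝ) {S Rt : E →L[ℂ] E}
    (hS : ∀ y : T.domain, S (z • (y : E) - T y) = y)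
    (hRt : ∀ x, ∃ hx : Rt x ∈ T.domain, z • Rt x - T ⟨Rt x, hx⟩ - t • V (Rt x) = x) :
    Rt = S + t • (S * V * Rt) := by
  ext x
  obtain ⟨hx, hxeq⟩ := hRt x
  have h := hS ⟨Rt x, hx⟩
  rw [sub_eq_iff_eq_add.mp hxeq, map_add, S.map_smul_of_tower] at h
  simpa using h.symm

theorem remainder_recursion_resolvent_general {H : Type*} [NormedAddCommGroup H]
    [InnerProductSpace ℂ H] [CompleteSpace H]
    (T : H →ₗ.[ℂ] H) (V : H →L[ℂ] H) (z : ℂ) (R : ℝ → H →L[ℂ] H)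
    (hR : ∀ t : ℝ, ∀ x : H, ∃ hx : R t x ∈ T.domain,
      z • R t x - T ⟨R t x, hx⟩ - t • V (R t x) = x)
    (hR' : ∀ t : ℝ, ∀ y : T.domain,
      R t (z • (y : H) - T y - t • V (y : H)) = (y : H))
    (p : ℕ) :
    R 1 - ∑ j ∈ Finset.range (p + 1), ((j.factorial : ℝ)⁻¹) • iteratedDeriv j R 0 =
      (R 1 - ∑ j ∈ Finset.range p, ((j.factorial : ℝ)⁻¹) • iteratedDeriv j R 0) -
        (R 0 * V) ^ p * R 0 := by
  have hresolvent (t : ℝ) : R t = R 0 + t • (R 0 * V * R t) :=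
    resolvent_eq_add_smul_mul T V z t (fun y ↦ by simpa using hR' 0 y) (hR t)
  have htaylor : (p ! : ℝ)⁻¹ • iteratedDeriv p R 0 = (R 0 * V) ^ p * R 0 := by
    rw [iteratedDeriv_eq_of_eq_add_smul_mul hresolvent,
      ← Nat.cast_smul_eq_nsmul ℝ, inv_smul_smul₀ (by positivity)]
  rw [Finset.sum_range_succ, htaylor, sub_add_eq_sub_sub]

/-- recursion for Taylor remainders of the resolvent. `T` is a
(possibly unbounded) self-adjoint operator on a separable Hilbert space, `V` a
bounded self-adjoint operator, `z` nonreal, and `R t` is the resolvent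
`(zI − T − tV)⁻¹` (characterized by the two-sided inverse property). With
`R_{p}(f_z) = R 1 − ∑_{j<p} (1/j!) dʲ/dtʲ|₀ R t`, one has
`R_{p+1}(f_z) = R_p(f_z) − ((zI − T)⁻¹ V)ᵖ (zI − T)⁻¹`. -/
theorem remainder_recursion_resolvent {H : Type*} [NormedAddCommGroup H]
    [InnerProductSpace ℂ H] [CompleteSpace H] [TopologicalSpace.SeparableSpace H]
    (T : H →ₗ.[ℂ] H) (hdense : Dense (T.domain : Set H)) (hT : T.adjoint = T)
    (V : H →L[ℂ] H) (hV : IsSelfAdjoint V)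
    (z : ℂ) (hz : z.im ≠ 0)
    (R : ℝ → H →L[ℂ] H)
    (hR : ∀ t : ℝ, ∀ x : H, ∃ hx : R t x ∈ T.domain,
      z • R t x - T ⟨R t x, hx⟩ - t • V (R t x) = x)
    (hR' : ∀ t : ℝ, ∀ y : T.domain,
      R t (z • (y : H) - T y - t • V (y : H)) = (y : H))
    (p : ℕ) :
    R 1 - ∑ j ∈ Finset.range (p + 1), ((j.factorial : ℝ)⁻¹) • iteratedDeriv j R 0 =
      (R 1 - ∑ j ∈ Finset.range p, ((j.factorial : ℝ)⁻¹) • iteratedDeriv j R 0) -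
        (R 0 * V) ^ p * R 0 :=
  remainder_recursion_resolvent_general T V z R hR hR' p
end

section
/- Trace-derivative identity for resolvent powers: let H₀ be self-adjoint affiliated with a semifinite von Neumann algebra (M, τ) and V = V* a Hilbert–Schmidt element of M. Then for p ≥ 2 and Im z ≠ 0, −τ[((zI − H₀)^{-1} V)^p (zI − H₀)^{-1}] = d/dz [ (1/p) τ[((zI − H₀)^{-1} V)^p] ]. -/
/-!
Near a non-real `z` the resolvent identity can be solved as `r w = (1 + (w - z) r z)⁻¹ r z`,
so `r` is differentiable with `r' = -r²`. The derivative of `(r V)ᵖ` is a sum of `p` terms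
`(r V)ⁱ (r' V) (r V)ᵖ⁻¹⁻ⁱ`, which cyclicity of `τ` makes all equal to
`τ((r V)ᵖ⁻¹ r' V) = -τ((r V)ᵖ r)`.
-/

open Filter Topology

section Resolvent

variable {𝕜 A : Type*} [NontriviallyNormedField 𝕜] [NormedRing A] [NormedAlgebra 𝕜 A]
  [HasSummableGeomSeries A]

theorem hasDerivAt_ringInverse_one_add_sub_smul (z : 𝕜) (a : A) :
    HasDerivAt (fun w : 𝕜 => Ring.inverse (1 + (w - z) • a)) (-a) z := by
  have hinv := hasFDerivAt_ringInverse (𝕜 := 𝕜) (1 : Aˣ)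
  rw [show ((1 : Aˣ) : A) = 1 + (z - z) • a by simp] at hinv
  have hline : HasDerivAt (fun w : 𝕜 => 1 + (w - z) • a) a z := by
    simpa using (((hasDerivAt_id z).sub_const z).smul_const a).const_add (1 : A)
  simpa [Function.comp_def] using hinv.comp_hasDerivAt z hline

theorem eventuallyEq_ringInverse_mul_of_resolvent_identity {r : 𝕜 → A} {z : 𝕜}
    (hres : ∀ᶠ w in 𝓝 z, r z - r w = (w - z) • (r z * r w)) :
    r =ᶠ[𝓝 z] fun w => Ring.inverse (1 + (w - z) • r z) * r z := by
  have hunit : ∀ᶠ w in 𝓝 z, IsUnit (1 + (w - z) • r z) := by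
    have hcont : ContinuousAt (fun w : 𝕜 => 1 + (w - z) • r z) z := by fun_prop
    exact hcont.eventually_mem (Units.isOpen.mem_nhds (by simp))
  filter_upwards [hres, hunit] with w hw hwu
  have hmul : (1 + (w - z) • r z) * r w = r z := by
    rw [add_mul, one_mul, smul_mul_assoc, ← hw]
    abel
  rw [← Ring.inverse_mul_cancel_left _ (r w) hwu, hmul]

theorem hasDerivAt_of_resolvent_identity {r : 𝕜 → A} {z : 𝕜}
    (hres : ∀ᶠ w in 𝓝 z, r z - r w = (w - z) • (r z * r w)) :
    HasDerivAt r (-(r z * r z)) z := by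
  rw [← neg_mul]
  exact ((hasDerivAt_ringInverse_one_add_sub_smul z (r z)).mul_const (r z)).congr_of_eventuallyEq
    (eventuallyEq_ringInverse_mul_of_resolvent_identity hres)

end Resolvent

section Trace

variable {A B : Type*} [Ring A] [AddCommMonoid B]

theorem map_sum_pow_mul_mul_pow_of_tracial (τ : A →+ B) (htrace : ∀ a b, τ (a * b) = τ (b * a))
    (a b : A) (n : ℕ) :
    τ (∑ i ∈ Finset.range n, a ^ (n.pred - i) * b * a ^ i) = n • τ (a ^ (n - 1) * b) := by
  rw [map_sum, Finset.sum_congr rfl (g := fun _ => τ (a ^ (n - 1) * b)), Finset.sum_const,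
    Finset.card_range]
  intro i hi
  rw [htrace, ← mul_assoc, ← pow_add, Nat.pred_eq_sub_one,
    Nat.add_sub_of_le (Nat.le_sub_one_of_lt (Finset.mem_range.mp hi))]

end Trace

theorem HasDerivAt.tracial_pow {𝕜 A : Type*} [NontriviallyNormedField 𝕜] [NormedRing A]
    [NormedAlgebra 𝕜 A] (τ : A →L[𝕜] 𝕜) (htrace : ∀ a b, τ (a * b) = τ (b * a))
    {f : 𝕜 → A} {f' : A} {x : 𝕜} (hf : HasDerivAt f f' x) (n : ℕ) :
    HasDerivAt (fun w => τ (f w ^ n)) (n * τ (f x ^ (n - 1) * f')) x := by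
  have h := τ.hasFDerivAt.comp_hasDerivAt x (hf.fun_pow' n)
  have hsum := map_sum_pow_mul_mul_pow_of_tracial (τ : A →+ 𝕜) htrace (f x) f' n
  simp only [AddMonoidHom.coe_coe, nsmul_eq_mul] at hsum
  rwa [Function.comp_def, hsum] at h

theorem trace_deriv_resolvent_powers_general {M : Type*} [NormedRing M]
    [NormedAlgebra ℂ M] [CompleteSpace M]
    (τ : M →L[ℂ] ℂ) (htrace : ∀ a b : M, τ (a * b) = τ (b * a))
    (r : ℂ → M)
    (hres : ∀ z w : ℂ, z.im ≠ 0 → w.im ≠ 0 → r z - r w = (w - z) • (r z * r w))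
    (V : M)
    (p : ℕ) (hp : 2 ≤ p) (z : ℂ) (hz : z.im ≠ 0) :
    HasDerivAt (fun w : ℂ => (p : ℂ)⁻¹ * τ ((r w * V) ^ p))
      (-τ ((r z * V) ^ p * r z)) z := by
  have hr : HasDerivAt r (-(r z * r z)) z := by
    refine hasDerivAt_of_resolvent_identity ?_
    filter_upwards [Complex.continuous_im.continuousAt.eventually_ne hz] with w hw
    exact hres z w hz hw
  have hderiv := ((hr.mul_const V).tracial_pow τ htrace p).const_mul (p : ℂ)⁻¹
  obtain ⟨q, rfl⟩ : ∃ q, p = q + 1 := ⟨p - 1, by omega⟩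
  have hcyc : τ ((r z * V) ^ q * (-(r z * r z) * V)) = -τ ((r z * V) ^ (q + 1) * r z) := by
    rw [pow_succ', neg_mul, mul_neg, map_neg, mul_assoc (r z), ← mul_assoc, htrace, ← mul_assoc,
      mul_assoc _ V, ← mul_assoc (r z)]
  have hq : ((q + 1 : ℕ) : ℂ) ≠ 0 := Nat.cast_ne_zero.mpr q.succ_ne_zero
  rwa [Nat.add_sub_cancel, hcyc, inv_mul_cancel_left₀ hq] at hderiv

/-- trace-derivative identity for resolvent powers. The semifinite
von Neumann algebra with trace is abstracted as a complete normed star algebra `M`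
over `ℂ` with a continuous tracial functional `τ`; the self-adjoint operator `H₀`
affiliated with `M` is encoded by its resolvent family `r z = (zI − H₀)⁻¹ ∈ M`,
satisfying the first resolvent identity and `r(z)* = r(z̄)`. For a self-adjoint
`V ∈ M` (Hilbert–Schmidt for `τ`), `p ≥ 2`, and `Im z ≠ 0`,
`−τ[((zI − H₀)⁻¹V)ᵖ (zI − H₀)⁻¹] = d/dz [(1/p) τ[((zI − H₀)⁻¹V)ᵖ]]`. -/
theorem trace_deriv_resolvent_powers {M : Type*} [NormedRing M] [StarRing M]
    [NormedAlgebra ℂ M] [CompleteSpace M]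
    (τ : M →L[ℂ] ℂ) (htrace : ∀ a b : M, τ (a * b) = τ (b * a))
    (r : ℂ → M)
    (hres : ∀ z w : ℂ, z.im ≠ 0 → w.im ≠ 0 → r z - r w = (w - z) • (r z * r w))
    (hstar : ∀ z : ℂ, z.im ≠ 0 → star (r z) = r (starRingEnd ℂ z))
    (V : M) (hV : star V = V)
    (p : ℕ) (hp : 2 ≤ p) (z : ℂ) (hz : z.im ≠ 0) :
    HasDerivAt (fun w : ℂ => (p : ℂ)⁻¹ * τ ((r w * V) ^ p))
      (-τ ((r z * V) ^ p * r z)) z :=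
  trace_deriv_resolvent_powers_general τ htrace r hres V p hp z hz
end
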